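/- Let X₁, X₂ be Banach spaces, V₁ ⊆ X₁, V₂ ⊆ X₂ nonempty closed convex sets such that (V_i, CB(X_i)) has the restricted center property for i = 1,2. Let X = X₁ ⊕_∞ X₂ and V = V₁ × V₂. If for each i the map cent_{V_i}(·) is lower Hausdorff semi-continuous on CB(X_i) (with Hausdorff metric on the domain), then cent_V(·) is lower Hausdorff semi-continuous on CB(X). -/

import Mathlib

open Metric Set Bornology Pointwise

/-- The farthest distance `r(v,B) = sup_{b ∈ B} ‖v - b‖`. -/
noncomputable def farr {X : Type*} [NormedAddCommGroup X] (v : X) (B : Set X) : ℝ :=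
  ⨆ b : B, ‖v - (b : X)‖

/-- The restricted Chebyshev radius `rad_V(B) = inf_{v ∈ V} r(v,B)`. -/
noncomputable def rad {X : Type*} [NormedAddCommGroup X] (V B : Set X) : ℝ :=
  ⨅ v : V, farr (v : X) B

/-- The set of restricted Chebyshev centers of `B` in `V`. -/
noncomputable def cheb {X : Type*} [NormedAddCommGroup X] (V B : Set X) : Set X :=
  {v ∈ V | farr v B = rad V B}

/-- The restricted Chebyshev-center map of `V` is lower Hausdorff semi-continuous on the
class of nonempty closed bounded subsets, with the Hausdorff metric on the domain. -/
noncomputable def lowerHSC {X : Type*} [NormedAddCommGroup X] (V : Set X) : Prop :=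
  ∀ B : Set X, B.Nonempty → IsClosed B → IsBounded B →
    ∀ ε > (0 : ℝ), ∃ δ > (0 : ℝ), ∀ A : Set X, A.Nonempty → IsClosed A → IsBounded A →
      hausdorffDist B A < δ → ∀ z ∈ cheb V B, ∃ w ∈ cheb V A, ‖z - w‖ < ε

/-!
In `X₁ ⊕_∞ X₂` the farthest distance `r(v, B)` is the maximum of the coordinate ones, so with
`R = rad_V(B)` the centers of `B` are exactly the pairs `(v₁, v₂) ∈ V₁ × V₂` with
`r(vᵢ, πᵢ B) ≤ R`. Since `r` and `rad` move by less than `δ` when `B` moves by less than `δ` in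
the Hausdorff distance, it suffices to show in each factor that the sublevel set
`{v ∈ Vᵢ | r(v, πᵢ B) ≤ R}`, `R ≥ rad_{Vᵢ}(πᵢ B)`, is lower semi-continuous in `(B, R)`.
If `R = rad_{Vᵢ}(πᵢ B)` it is `cent_{Vᵢ}(πᵢ B)` and this is the hypothesis. Otherwise fix
`c ∈ Vᵢ` with `r(c, πᵢ B) < R`: by convexity of `r(·, A)`, moving every point of the sublevel
set a fixed small fraction of the way towards `c` gains a uniform margin, which absorbs the
perturbation of `B` and `R`.
-/

section farr

variable {X : Type*} [NormedAddCommGroup X] {A B : Set X} {v w : X}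

lemma bddAbove_range_norm_sub (v : X) (hBb : IsBounded B) :
    BddAbove (range fun b : B => ‖v - (b : X)‖) := by
  obtain ⟨r, hr⟩ := hBb.subset_closedBall v
  refine ⟨r, ?_⟩
  rintro _ ⟨b, rfl⟩
  simpa [dist_eq_norm, norm_sub_rev] using hr b.2

lemma le_farr (hBb : IsBounded B) {b : X} (hb : b ∈ B) : ‖v - b‖ ≤ farr v B :=
  le_ciSup (bddAbove_range_norm_sub v hBb) ⟨b, hb⟩

lemma farr_le {r : ℝ} (hBne : B.Nonempty) (h : ∀ b ∈ B, ‖v - b‖ ≤ r) : farr v B ≤ r :=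
  have := hBne.to_subtype
  ciSup_le fun b => h b b.2

lemma farr_nonneg (hBne : B.Nonempty) (hBb : IsBounded B) : 0 ≤ farr v B :=
  (norm_nonneg _).trans (le_farr hBb hBne.some_mem)

lemma norm_sub_le_farr_add_farr (hBne : B.Nonempty) (hBb : IsBounded B) :
    ‖v - w‖ ≤ farr v B + farr w B := by
  obtain ⟨b, hb⟩ := hBne
  calc ‖v - w‖ ≤ ‖v - b‖ + ‖b - w‖ := norm_sub_le_norm_sub_add_norm_sub _ _ _
    _ = ‖v - b‖ + ‖w - b‖ := by rw [norm_sub_rev b]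
    _ ≤ farr v B + farr w B := add_le_add (le_farr hBb hb) (le_farr hBb hb)

lemma farr_closure (hBne : B.Nonempty) (hBb : IsBounded B) :
    farr v (closure B) = farr v B := by
  refine le_antisymm (farr_le hBne.closure fun b hb => ?_)
    (farr_le hBne fun b hb => le_farr hBb.closure (subset_closure hb))
  have hclosed : IsClosed {x : X | ‖v - x‖ ≤ farr v B} :=
    isClosed_le (by fun_prop) continuous_const
  exact closure_minimal (fun x hx => le_farr hBb hx) hclosed hb

lemma farr_le_farr_add_of_hausdorffDist_lt {δ : ℝ} (hBne : B.Nonempty) (hBb : IsBounded B)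
    (hAne : A.Nonempty) (hAb : IsBounded A) (hBA : hausdorffDist B A < δ) :
    farr v A ≤ farr v B + δ := by
  refine farr_le hAne fun a ha => ?_
  obtain ⟨b, hb, hba⟩ := exists_dist_lt_of_hausdorffDist_lt' ha hBA
    (hausdorffEDist_ne_top_of_nonempty_of_bounded hBne hAne hBb hAb)
  calc ‖v - a‖ ≤ ‖v - b‖ + ‖b - a‖ := norm_sub_le_norm_sub_add_norm_sub _ _ _
    _ ≤ farr v B + δ := add_le_add (le_farr hBb hb) (dist_eq_norm b a ▸ hba.le)

lemma convexOn_farr [NormedSpace ℝ X] (hBne : B.Nonempty) (hBb : IsBounded B) :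
    ConvexOn ℝ univ (farr · B) := by
  refine ⟨convex_univ, fun x _ y _ a b ha hb hab => farr_le hBne fun c hc => ?_⟩
  have hsplit : a • x + b • y - c = a • (x - c) + b • (y - c) := by
    linear_combination (norm := module) hab • c
  calc ‖a • x + b • y - c‖ ≤ ‖a • (x - c)‖ + ‖b • (y - c)‖ := hsplit ▸ norm_add_le _ _
    _ = a * ‖x - c‖ + b * ‖y - c‖ := by
      rw [norm_smul_of_nonneg ha, norm_smul_of_nonneg hb]
    _ ≤ a • farr x B + b • farr y B := by
      simp only [smul_eq_mul]
      gcongr <;> exact le_farr hBb hc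

end farr

section rad

variable {X : Type*} [NormedAddCommGroup X] {V A B : Set X} {v : X}

lemma rad_le_farr (hBne : B.Nonempty) (hBb : IsBounded B) (hv : v ∈ V) :
    rad V B ≤ farr v B :=
  ciInf_le ⟨0, by rintro _ ⟨w, rfl⟩; exact farr_nonneg hBne hBb⟩ (⟨v, hv⟩ : V)

lemma le_rad {r : ℝ} (hVne : V.Nonempty) (h : ∀ v ∈ V, r ≤ farr v B) : r ≤ rad V B :=
  have := hVne.to_subtype
  le_ciInf fun v => h v v.2

lemma rad_closure (hBne : B.Nonempty) (hBb : IsBounded B) : rad V (closure B) = rad V B :=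
  iInf_congr fun _ => farr_closure hBne hBb

lemma rad_le_rad_add_of_hausdorffDist_lt {δ : ℝ} (hVne : V.Nonempty) (hBne : B.Nonempty)
    (hBb : IsBounded B) (hAne : A.Nonempty) (hAb : IsBounded A) (hBA : hausdorffDist B A < δ) :
    rad V A ≤ rad V B + δ := by
  have h : rad V A - δ ≤ rad V B := le_rad hVne fun v hv => by
    linarith [rad_le_farr hAne hAb hv,
      farr_le_farr_add_of_hausdorffDist_lt (v := v) hBne hBb hAne hAb hBA]
  linarith

lemma mem_cheb_iff_farr_le (hBne : B.Nonempty) (hBb : IsBounded B) :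
    v ∈ cheb V B ↔ v ∈ V ∧ farr v B ≤ rad V B :=
  and_congr_right fun hv => (rad_le_farr hBne hBb hv).ge_iff_eq'.symm

lemma cheb_closure (hBne : B.Nonempty) (hBb : IsBounded B) : cheb V (closure B) = cheb V B := by
  simp only [cheb, farr_closure hBne hBb, rad_closure hBne hBb]

end rad

lemma LipschitzWith.hausdorffDist_image_le {α β : Type*} [PseudoMetricSpace α]
    [PseudoMetricSpace β] {f : α → β} (hf : LipschitzWith 1 f) {s t : Set α}
    (hst : hausdorffEDist s t ≠ ⊤) :
    hausdorffDist (f '' s) (f '' t) ≤ hausdorffDist s t := by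
  have hle : hausdorffEDist (f '' s) (f '' t) ≤ hausdorffEDist s t := by
    have himage : ∀ x y, infEDist (f x) (f '' y) ≤ infEDist x y := fun x y =>
      le_infEDist.2 fun z hz =>
        (infEDist_le_edist_of_mem (mem_image_of_mem f hz)).trans
          (by simpa using hf x z)
    refine hausdorffEDist_le_of_infEDist ?_ ?_
    · rintro _ ⟨x, hx, rfl⟩
      exact (himage x t).trans (infEDist_le_hausdorffEDist_of_mem hx)
    · rintro _ ⟨x, hx, rfl⟩
      rw [hausdorffEDist_comm]
      exact (himage x s).trans (infEDist_le_hausdorffEDist_of_mem hx)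
  exact ENNReal.toReal_mono hst hle

section prod

variable {X₁ X₂ : Type*} [NormedAddCommGroup X₁] [NormedAddCommGroup X₂]
  {V₁ : Set X₁} {V₂ : Set X₂} {B : Set (X₁ × X₂)}

lemma farr_prod (v : X₁ × X₂) (hBne : B.Nonempty) (hBb : IsBounded B) :
    farr v B = max (farr v.1 (Prod.fst '' B)) (farr v.2 (Prod.snd '' B)) := by
  refine le_antisymm (farr_le hBne fun b hb => ?_)
    (max_le (farr_le (hBne.image _) ?_) (farr_le (hBne.image _) ?_))
  · exact max_le_max (le_farr hBb.image_fst (mem_image_of_mem _ hb))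
      (le_farr hBb.image_snd (mem_image_of_mem _ hb))
  · rintro _ ⟨b, hb, rfl⟩
    exact (norm_fst_le (v - b)).trans (le_farr hBb hb)
  · rintro _ ⟨b, hb, rfl⟩
    exact (norm_snd_le (v - b)).trans (le_farr hBb hb)

lemma mem_cheb_prod_iff {v : X₁ × X₂} (hBne : B.Nonempty) (hBb : IsBounded B) :
    v ∈ cheb (V₁ ×ˢ V₂) B ↔ v.1 ∈ V₁ ∧ v.2 ∈ V₂ ∧
      farr v.1 (Prod.fst '' B) ≤ rad (V₁ ×ˢ V₂) B ∧
      farr v.2 (Prod.snd '' B) ≤ rad (V₁ ×ˢ V₂) B := by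
  rw [mem_cheb_iff_farr_le hBne hBb, farr_prod v hBne hBb, max_le_iff, mem_prod, and_assoc]

lemma rad_image_fst_le (hV₁ne : V₁.Nonempty) (hV₂ne : V₂.Nonempty) (hBne : B.Nonempty)
    (hBb : IsBounded B) : rad V₁ (Prod.fst '' B) ≤ rad (V₁ ×ˢ V₂) B :=
  le_rad (hV₁ne.prod hV₂ne) fun v hv =>
    (rad_le_farr (hBne.image _) hBb.image_fst hv.1).trans
      ((farr_prod v hBne hBb).symm ▸ le_max_left _ _)

lemma rad_image_snd_le (hV₁ne : V₁.Nonempty) (hV₂ne : V₂.Nonempty) (hBne : B.Nonempty)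
    (hBb : IsBounded B) : rad V₂ (Prod.snd '' B) ≤ rad (V₁ ×ˢ V₂) B :=
  le_rad (hV₁ne.prod hV₂ne) fun v hv =>
    (rad_le_farr (hBne.image _) hBb.image_snd hv.2).trans
      ((farr_prod v hBne hBb).symm ▸ le_max_right _ _)

end prod

section sublevel

variable {X : Type*} [NormedAddCommGroup X] {V B : Set X}

-- Projections of closed sets need not be closed; the hypothesis reaches them via closures.
lemma lowerHSC.exists_mem_cheb_norm_sub_lt (h : lowerHSC V) (hBne : B.Nonempty)
    (hBb : IsBounded B) {ε : ℝ} (hε : 0 < ε) :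
    ∃ δ > (0 : ℝ), ∀ A : Set X, A.Nonempty → IsBounded A → hausdorffDist B A < δ →
      ∀ z ∈ cheb V B, ∃ w ∈ cheb V A, ‖z - w‖ < ε := by
  obtain ⟨δ, hδ, H⟩ := h (closure B) hBne.closure isClosed_closure hBb.closure ε hε
  refine ⟨δ, hδ, fun A hAne hAb hBA z hz => ?_⟩
  rw [← cheb_closure hBne hBb] at hz
  rw [← cheb_closure hAne hAb]
  exact H _ hAne.closure isClosed_closure hAb.closure (by rwa [hausdorffDist_closure]) z hz

variable [NormedSpace ℝ X]

lemma exists_farr_le_norm_sub_lt_of_rad_lt (hVne : V.Nonempty) (hVconv : Convex ℝ V)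
    (hBne : B.Nonempty) (hBb : IsBounded B) {R ε : ℝ} (hR : rad V B < R) (hε : 0 < ε) :
    ∃ δ > (0 : ℝ), ∀ A : Set X, A.Nonempty → IsBounded A → hausdorffDist B A < δ →
      ∀ R', R ≤ R' + δ → ∀ z ∈ V, farr z B ≤ R → ∃ w ∈ V, farr w A ≤ R' ∧ ‖z - w‖ < ε := by
  have := hVne.to_subtype
  obtain ⟨⟨c, hcV⟩, hcB⟩ := exists_lt_of_ciInf_lt hR
  have hR0 : 0 ≤ R := (farr_nonneg hBne hBb).trans hcB.le
  set g := R - farr c B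
  set t := ε / (ε + 2 * R)
  have ht0 : 0 < t := by positivity
  have ht1 : t ≤ 1 := (div_le_one (by positivity)).2 (by linarith)
  have htR : t * (2 * R) < ε := by
    rw [div_mul_eq_mul_div, div_lt_iff₀ (by positivity)]
    nlinarith
  refine ⟨t * g / 2, by have : 0 < g := sub_pos.2 hcB; positivity,
    fun A hAne hAb hBA R' hR' z hzV hzB => ⟨(1 - t) • z + t • c,
      hVconv hzV hcV (by linarith) ht0.le (by ring), ?_, ?_⟩⟩
  · have hfarr (v : X) := farr_le_farr_add_of_hausdorffDist_lt (v := v) hBne hBb hAne hAb hBA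
    calc farr ((1 - t) • z + t • c) A ≤ (1 - t) * farr z A + t * farr c A :=
          (convexOn_farr hAne hAb).2 trivial trivial (by linarith) ht0.le (by ring)
      _ ≤ (1 - t) * (R + t * g / 2) + t * (farr c B + t * g / 2) := by
          have : 0 ≤ 1 - t := by linarith
          gcongr
          · linarith [hfarr z]
          · exact hfarr c
      _ = R - t * g / 2 := by ring
      _ ≤ R' := by linarith
  · have hsub : z - ((1 - t) • z + t • c) = t • (z - c) := by module
    calc ‖z - ((1 - t) • z + t • c)‖ = t * ‖z - c‖ := by
          rw [hsub, norm_smul_of_nonneg ht0.le]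
      _ ≤ t * (2 * R) := by
          gcongr
          linarith [norm_sub_le_farr_add_farr (v := z) (w := c) hBne hBb]
      _ < ε := htR

lemma lowerHSC.exists_farr_le_norm_sub_lt (h : lowerHSC V) (hVne : V.Nonempty)
    (hVconv : Convex ℝ V) (hBne : B.Nonempty) (hBb : IsBounded B) {R ε : ℝ}
    (hR : rad V B ≤ R) (hε : 0 < ε) :
    ∃ δ > (0 : ℝ), ∀ A : Set X, A.Nonempty → IsBounded A → hausdorffDist B A < δ →
      ∀ R', rad V A ≤ R' → R ≤ R' + δ →
        ∀ z ∈ V, farr z B ≤ R → ∃ w ∈ V, farr w A ≤ R' ∧ ‖z - w‖ < ε := by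
  rcases hR.lt_or_eq with hlt | rfl
  · obtain ⟨δ, hδ, H⟩ := exists_farr_le_norm_sub_lt_of_rad_lt hVne hVconv hBne hBb hlt hε
    exact ⟨δ, hδ, fun A hAne hAb hBA R' _ hR' => H A hAne hAb hBA R' hR'⟩
  · obtain ⟨δ, hδ, H⟩ := h.exists_mem_cheb_norm_sub_lt hBne hBb hε
    refine ⟨δ, hδ, fun A hAne hAb hBA R' hAR' _ z hzV hzB => ?_⟩
    obtain ⟨w, ⟨hwV, hwA⟩, hzw⟩ :=
      H A hAne hAb hBA z ((mem_cheb_iff_farr_le hBne hBb).2 ⟨hzV, hzB⟩)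
    exact ⟨w, hwV, hwA.trans_le hAR', hzw⟩

end sublevel

theorem stmt15_general {X₁ X₂ : Type*} [NormedAddCommGroup X₁] [NormedSpace ℝ X₁]
    [NormedAddCommGroup X₂] [NormedSpace ℝ X₂]
    (V₁ : Set X₁) (V₂ : Set X₂)
    (hV₁ne : V₁.Nonempty) (hV₁conv : Convex ℝ V₁)
    (hV₂ne : V₂.Nonempty) (hV₂conv : Convex ℝ V₂)
    (h₁ : lowerHSC V₁) (h₂ : lowerHSC V₂) :
    lowerHSC (V₁ ×ˢ V₂) := by
  intro B hBne _ hBb ε hε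
  obtain ⟨δ₁, hδ₁, H₁⟩ := h₁.exists_farr_le_norm_sub_lt hV₁ne hV₁conv (hBne.image _)
    hBb.image_fst (rad_image_fst_le hV₁ne hV₂ne hBne hBb) hε
  obtain ⟨δ₂, hδ₂, H₂⟩ := h₂.exists_farr_le_norm_sub_lt hV₂ne hV₂conv (hBne.image _)
    hBb.image_snd (rad_image_snd_le hV₁ne hV₂ne hBne hBb) hε
  refine ⟨min δ₁ δ₂, lt_min hδ₁ hδ₂, fun A hAne _ hAb hBA z hz => ?_⟩
  have hfin := hausdorffEDist_ne_top_of_nonempty_of_bounded hBne hAne hBb hAb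
  have hrad : rad (V₁ ×ˢ V₂) B ≤ rad (V₁ ×ˢ V₂) A + min δ₁ δ₂ :=
    rad_le_rad_add_of_hausdorffDist_lt (hV₁ne.prod hV₂ne) hAne hAb hBne hBb
      (by rwa [hausdorffDist_comm])
  obtain ⟨hz₁, hz₂, hzB₁, hzB₂⟩ := (mem_cheb_prod_iff hBne hBb).1 hz
  obtain ⟨w₁, hw₁, hwA₁, hzw₁⟩ := H₁ _ (hAne.image _) hAb.image_fst
    (((LipschitzWith.prod_fst).hausdorffDist_image_le hfin).trans_lt
      (hBA.trans_le (min_le_left _ _)))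
    _ (rad_image_fst_le hV₁ne hV₂ne hAne hAb) (by linarith [min_le_left δ₁ δ₂]) z.1 hz₁ hzB₁
  obtain ⟨w₂, hw₂, hwA₂, hzw₂⟩ := H₂ _ (hAne.image _) hAb.image_snd
    (((LipschitzWith.prod_snd).hausdorffDist_image_le hfin).trans_lt
      (hBA.trans_le (min_le_right _ _)))
    _ (rad_image_snd_le hV₁ne hV₂ne hAne hAb) (by linarith [min_le_right δ₁ δ₂]) z.2 hz₂ hzB₂
  exact ⟨(w₁, w₂), (mem_cheb_prod_iff hAne hAb).2 ⟨hw₁, hw₂, hwA₁, hwA₂⟩,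
    max_lt hzw₁ hzw₂⟩

theorem stmt15 {X₁ X₂ : Type*} [NormedAddCommGroup X₁] [NormedSpace ℝ X₁] [CompleteSpace X₁]
    [NormedAddCommGroup X₂] [NormedSpace ℝ X₂] [CompleteSpace X₂]
    (V₁ : Set X₁) (V₂ : Set X₂)
    (hV₁ne : V₁.Nonempty) (hV₁c : IsClosed V₁) (hV₁conv : Convex ℝ V₁)
    (hV₂ne : V₂.Nonempty) (hV₂c : IsClosed V₂) (hV₂conv : Convex ℝ V₂)
    (hrcp₁ : ∀ B₁ : Set X₁, B₁.Nonempty → IsClosed B₁ → IsBounded B₁ → (cheb V₁ B₁).Nonempty)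
    (hrcp₂ : ∀ B₂ : Set X₂, B₂.Nonempty → IsClosed B₂ → IsBounded B₂ → (cheb V₂ B₂).Nonempty)
    (h₁ : lowerHSC V₁) (h₂ : lowerHSC V₂) :
    lowerHSC (V₁ ×ˢ V₂) :=
  stmt15_general V₁ V₂ hV₁ne hV₁conv hV₂ne hV₂conv h₁ h₂
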